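/- Let f be a family of functions assigning a nonnegative real number f(v) to each finitely-indexed family v of nonnegative reals, and let C_f be the associated convex roof coherence measure. Suppose that for every tripartite pure state |φ⟩_ABC = Σ_{i,j,k} c_{ijk} |i⟩_A|j⟩_B|k⟩_C with Σ_{i,j,k} |c_{ijk}|² = 1, one has C_f(|φ⟩_ABC) ≥ Σ_{i : p_i > 0} p_i C_f(|α_i⟩_A) + Σ_{j : q_j > 0} q_j C_f(|β_j⟩_B) + Σ_{k : r_k > 0} r_k C_f(|γ_k⟩_C), where p_i = Σ_{j,k} |c_{ijk}|², q_j = Σ_{i,k} |c_{ijk}|², r_k = Σ_{i,j} |c_{ijk}|², |α_i⟩_A = (1/√p_i) Σ_{j,k} c_{ijk} |i⟩_A (i.e., the phase-weighted basis states appearing in the decomposition ρ_A = Σ_i p_i |α_i⟩⟨α_i|_A), and similarly for |β_j⟩_B and |γ_k⟩_C. Then C_f is superadditive for tripartite states: for every tripartite density matrix ρ_ABC, C_f(ρ_ABC) ≥ C_f(ρ_A) + C_f(ρ_B) + C_f(ρ_C), where ρ_A, ρ_B, ρ_C are the single-party reduced density matrices of ρ_ABC. -/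

import Mathlib

noncomputable section

open scoped ComplexOrder

/-- The outer product `|φ⟩⟨φ|` of a vector with itself. -/
def outer {ι : Type} (φ : ι → ℂ) : Matrix ι ι ℂ :=
  Matrix.of fun i i' => φ i * (starRingEnd ℂ) (φ i')

/-- A pure state: a unit vector in the fixed computational basis. -/
def IsUnitVec {ι : Type} [Fintype ι] (φ : ι → ℂ) : Prop :=
  ∑ i, ‖φ i‖ ^ 2 = 1

/-- A density matrix: positive semidefinite with trace one. -/
def IsDensity {ι : Type} [Fintype ι] (ρ : Matrix ι ι ℂ) : Prop :=
  ρ.PosSemidef ∧ ρ.trace = 1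

/-- The coherence measure on pure states: `C_f(|φ⟩) = f((|c_i|²)_i)`. -/
def pureCoh (f : (ι : Type) → [Fintype ι] → (ι → ℝ) → ℝ)
    {ι : Type} [Fintype ι] (φ : ι → ℂ) : ℝ :=
  f ι fun i => ‖φ i‖ ^ 2

/-- The convex roof extension of `C_f` to density matrices:
`C_f(ρ) = inf Σ_k p_k C_f(|φ_k⟩)` over finite ensembles `ρ = Σ_k p_k |φ_k⟩⟨φ_k|`. -/
def mixedCoh (f : (ι : Type) → [Fintype ι] → (ι → ℝ) → ℝ)
    {ι : Type} [Fintype ι] (ρ : Matrix ι ι ℂ) : ℝ :=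
  sInf { x : ℝ | ∃ (K : ℕ) (p : Fin K → ℝ) (φ : Fin K → ι → ℂ),
    (∀ k, 0 ≤ p k) ∧ (∑ k, p k) = 1 ∧ (∀ k, IsUnitVec (φ k)) ∧
    ρ = ∑ k, Complex.ofReal (p k) • outer (φ k) ∧
    x = ∑ k, p k * pureCoh f (φ k) }

/-!
Fix an ensemble `ρ = ∑ₖ pₖ |φₖ⟩⟨φₖ|`. Every positive semidefinite matrix `σ` can be written as
`∑ᵢ σᵢᵢ |αᵢ⟩⟨αᵢ|` with unit vectors `αᵢ`; applied to the reduced states of `|φₖ⟩`, this gives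
exactly the decompositions the hypothesis speaks of, with weights `pᵢ = ∑ⱼₗ |cᵢⱼₗ|²`. Mixing them
over `k` yields ensembles of `ρ_A`, `ρ_B`, `ρ_C`, so `C_f(ρ_A) + C_f(ρ_B) + C_f(ρ_C)` is at most
`∑ₖ pₖ (…)`, which the hypothesis bounds by `∑ₖ pₖ C_f(φₖ)`; now take the infimum over ensembles.
-/

open Matrix

section Decomposition

variable {ι : Type} [Fintype ι]

lemma outer_posSemidef (φ : ι → ℂ) : (outer φ).PosSemidef :=
  posSemidef_vecMulVec_self_star φ

lemma exists_isUnitVec_outer_eq [Nonempty ι] (v : ι → ℂ) :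
    ∃ u : ι → ℂ, IsUnitVec u ∧ outer v = ((∑ i, ‖v i‖ ^ 2 : ℝ) : ℂ) • outer u := by
  classical
  by_cases hv : v = 0
  · obtain ⟨i₀⟩ := ‹Nonempty ι›
    refine ⟨Pi.single i₀ 1, ?_, ?_⟩
    · rw [IsUnitVec, Finset.sum_eq_single i₀ (fun i _ hi => by simp [hi]) (by simp)]
      simp
    · subst hv
      ext
      simp [outer]
  have hs : 0 < ∑ i, ‖v i‖ ^ 2 := by
    obtain ⟨i, hi⟩ := Function.ne_iff.mp hv
    exact Finset.sum_pos' (fun i _ => sq_nonneg _)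
      ⟨i, Finset.mem_univ i, pow_pos (norm_pos_iff.mpr hi) 2⟩
  set s := ∑ i, ‖v i‖ ^ 2
  refine ⟨((√s)⁻¹ : ℂ) • v, ?_, ?_⟩
  · have : ∀ i, ‖((√s)⁻¹ : ℂ) • v i‖ ^ 2 = s⁻¹ * ‖v i‖ ^ 2 := fun i => by
      rw [norm_smul, mul_pow, norm_inv, Complex.norm_real, Real.norm_of_nonneg (Real.sqrt_nonneg s),
        inv_pow, Real.sq_sqrt hs.le]
    simp only [IsUnitVec, Pi.smul_apply, this, ← Finset.mul_sum]
    exact inv_mul_cancel₀ hs.ne'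
  · have hs' : ((√s : ℝ) : ℂ) ≠ 0 := by exact_mod_cast (Real.sqrt_pos.mpr hs).ne'
    have hss : (s : ℂ) = (√s : ℂ) ^ 2 := by exact_mod_cast (Real.sq_sqrt hs.le).symm
    ext i i'
    simp only [outer, Matrix.smul_apply, Matrix.of_apply, Pi.smul_apply, smul_eq_mul, map_mul,
      map_inv₀, Complex.conj_ofReal, hss]
    field_simp

open scoped MatrixOrder in
/-- With `S = √ρ` Hermitian, `ρ = S Sᴴ` is the sum of the outer products of the columns of `S`,
whose squared norms are the diagonal entries of `ρ`. -/
lemma Matrix.PosSemidef.exists_eq_sum_diag_smul_outer [DecidableEq ι] {ρ : Matrix ι ι ℂ}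
    (hρ : ρ.PosSemidef) :
    ∃ φ : ι → ι → ℂ, (∀ m, IsUnitVec (φ m)) ∧ ρ = ∑ m, ((ρ m m).re : ℂ) • outer (φ m) := by
  obtain ⟨S, hS, hSS⟩ : ∃ S : Matrix ι ι ℂ, Sᴴ = S ∧ S * S = ρ :=
    ⟨CFC.sqrt ρ, (CFC.sqrt_nonneg ρ).posSemidef.1, CFC.sqrt_mul_sqrt_self ρ hρ.nonneg⟩
  have hρS : ρ = ∑ m, outer fun i => S i m := by
    rw [← hSS]
    nth_rewrite 2 [← hS]
    ext i i'
    simp [Matrix.mul_apply, outer, Matrix.sum_apply]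
  have hdiag : ∀ m, (ρ m m).re = ∑ i, ‖S i m‖ ^ 2 := fun m => by
    have hsymm : ∀ i j, ‖S i j‖ = ‖S j i‖ := fun i j => by
      rw [← norm_star, ← conjTranspose_apply, hS]
    simp [hρS, outer, Matrix.sum_apply, Complex.mul_conj, Complex.normSq_eq_norm_sq]
    norm_cast
    simp only [hsymm m]
  choose φ hφ hSφ using fun m =>
    haveI : Nonempty ι := ⟨m⟩
    exists_isUnitVec_outer_eq fun i => S i m
  refine ⟨φ, hφ, ?_⟩
  simp only [hdiag, ← hSφ]
  exact hρS

end Decomposition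

section ConvexRoof

variable (f : (ι : Type) → [Fintype ι] → (ι → ℝ) → ℝ) {ι : Type} [Fintype ι]

def ensembleValues (ρ : Matrix ι ι ℂ) : Set ℝ :=
  { x : ℝ | ∃ (K : ℕ) (p : Fin K → ℝ) (φ : Fin K → ι → ℂ),
    (∀ k, 0 ≤ p k) ∧ (∑ k, p k) = 1 ∧ (∀ k, IsUnitVec (φ k)) ∧
    ρ = ∑ k, Complex.ofReal (p k) • outer (φ k) ∧
    x = ∑ k, p k * pureCoh f (φ k) }

lemma sum_mem_ensembleValues {J : Type} [Fintype J] {ρ : Matrix ι ι ℂ} {p : J → ℝ}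
    {φ : J → ι → ℂ} (hp0 : ∀ j, 0 ≤ p j) (hp1 : ∑ j, p j = 1) (hφ : ∀ j, IsUnitVec (φ j))
    (hρ : ρ = ∑ j, (p j : ℂ) • outer (φ j)) :
    ∑ j, p j * pureCoh f (φ j) ∈ ensembleValues f ρ := by
  let e := (Fintype.equivFin J).symm
  refine ⟨Fintype.card J, p ∘ e, φ ∘ e, fun k => hp0 _, ?_, fun k => hφ _, ?_, ?_⟩
  · rw [← hp1]
    exact e.sum_comp p
  · rw [hρ]
    exact (e.sum_comp fun j => (p j : ℂ) • outer (φ j)).symm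
  · exact (e.sum_comp fun j => p j * pureCoh f (φ j)).symm

lemma pureCoh_nonneg (hf : ∀ (ι : Type) [Fintype ι] (v : ι → ℝ), (∀ i, 0 ≤ v i) → 0 ≤ f ι v)
    (φ : ι → ℂ) : 0 ≤ pureCoh f φ :=
  hf ι _ fun _ => sq_nonneg _

lemma bddBelow_ensembleValues
    (hf : ∀ (ι : Type) [Fintype ι] (v : ι → ℝ), (∀ i, 0 ≤ v i) → 0 ≤ f ι v)
    (ρ : Matrix ι ι ℂ) : BddBelow (ensembleValues f ρ) := by
  refine ⟨0, ?_⟩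
  rintro x ⟨K, p, φ, hp0, -, -, -, rfl⟩
  exact Finset.sum_nonneg fun k _ => mul_nonneg (hp0 k) (pureCoh_nonneg f hf _)

lemma ensembleValues_nonempty [DecidableEq ι] {ρ : Matrix ι ι ℂ} (hρ : IsDensity ρ) :
    (ensembleValues f ρ).Nonempty := by
  obtain ⟨φ, hφ, hρφ⟩ := hρ.1.exists_eq_sum_diag_smul_outer
  have hdiag : ∀ m, 0 ≤ (ρ m m).re := fun m => (Complex.nonneg_iff.mp hρ.1.diag_nonneg).1
  refine ⟨_, sum_mem_ensembleValues f hdiag ?_ hφ hρφ⟩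
  simpa [Matrix.trace] using congrArg Complex.re hρ.2

lemma mixedCoh_le_of_eq_sum
    (hf : ∀ (ι : Type) [Fintype ι] (v : ι → ℝ), (∀ i, 0 ≤ v i) → 0 ≤ f ι v)
    {J : Type} [Fintype J] {ρ : Matrix ι ι ℂ} {p : J → ℝ} {φ : J → ι → ℂ}
    (hp0 : ∀ j, 0 ≤ p j) (hp1 : ∑ j, p j = 1) (hφ : ∀ j, IsUnitVec (φ j))
    (hρ : ρ = ∑ j, (p j : ℂ) • outer (φ j)) :
    mixedCoh f ρ ≤ ∑ j, p j * pureCoh f (φ j) :=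
  csInf_le (bddBelow_ensembleValues f hf ρ) (sum_mem_ensembleValues f hp0 hp1 hφ hρ)

lemma le_mixedCoh_of_forall [DecidableEq ι] {ρ : Matrix ι ι ℂ} (hρ : IsDensity ρ) {x : ℝ}
    (h : ∀ (K : ℕ) (p : Fin K → ℝ) (φ : Fin K → ι → ℂ), (∀ k, 0 ≤ p k) → ∑ k, p k = 1 →
      (∀ k, IsUnitVec (φ k)) → ρ = ∑ k, (p k : ℂ) • outer (φ k) →
      x ≤ ∑ k, p k * pureCoh f (φ k)) :
    x ≤ mixedCoh f ρ := by
  refine le_csInf (ensembleValues_nonempty f hρ) ?_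
  rintro _ ⟨K, p, φ, hp0, hp1, hφ, hρφ, rfl⟩
  exact h K p φ hp0 hp1 hφ hρφ

lemma mixedCoh_sum_smul_sum_le
    (hf : ∀ (ι : Type) [Fintype ι] (v : ι → ℝ), (∀ i, 0 ≤ v i) → 0 ≤ f ι v)
    {K J : Type} [Fintype K] [Fintype J] {p : K → ℝ} {w : K → J → ℝ} {α : K → J → ι → ℂ}
    (hp0 : ∀ k, 0 ≤ p k) (hp1 : ∑ k, p k = 1) (hw0 : ∀ k j, 0 ≤ w k j)
    (hw1 : ∀ k, ∑ j, w k j = 1) (hα : ∀ k j, IsUnitVec (α k j)) :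
    mixedCoh f (∑ k, (p k : ℂ) • ∑ j, (w k j : ℂ) • outer (α k j))
      ≤ ∑ k, p k * ∑ j, w k j * pureCoh f (α k j) := by
  have := mixedCoh_le_of_eq_sum f hf (J := K × J)
    (ρ := ∑ k, (p k : ℂ) • ∑ j, (w k j : ℂ) • outer (α k j)) (p := fun t => p t.1 * w t.1 t.2)
    (φ := fun t => α t.1 t.2) (fun t => mul_nonneg (hp0 _) (hw0 _ _))
    (by simp [Fintype.sum_prod_type, ← Finset.mul_sum, hw1, hp1]) (fun t => hα _ _)
    (by simp only [Fintype.sum_prod_type, Finset.smul_sum, smul_smul, Complex.ofReal_mul])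
  simpa [Fintype.sum_prod_type, Finset.mul_sum, mul_assoc] using this

end ConvexRoof

section ReducedState

variable {ι X Y T : Type} [Fintype X] [Fintype Y]

/-- The partial trace over `X × Y`, once `T` is identified with `ι × X × Y` through `e`. -/
def reducedState (e : ι × X × Y ≃ T) (M : Matrix T T ℂ) : Matrix ι ι ℂ :=
  Matrix.of fun i i' => ∑ x, ∑ y, M (e (i, x, y)) (e (i', x, y))

lemma reducedState_sum_smul (e : ι × X × Y ≃ T) {K : Type} [Fintype K] (c : K → ℂ)
    (M : K → Matrix T T ℂ) :
    reducedState e (∑ k, c k • M k) = ∑ k, c k • reducedState e (M k) := by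
  ext i i'
  simp only [reducedState, Matrix.of_apply, Matrix.sum_apply, Matrix.smul_apply, smul_eq_mul,
    Finset.mul_sum]
  exact (Finset.sum_congr rfl fun _ _ => Finset.sum_comm).trans Finset.sum_comm

lemma reducedState_outer (e : ι × X × Y ≃ T) (φ : T → ℂ) :
    reducedState e (outer φ) = ∑ x, ∑ y, outer fun i => φ (e (i, x, y)) := by
  ext i i'
  simp [reducedState, outer, Matrix.sum_apply]

lemma Equiv.sum_sum_sum_comp [Fintype ι] [Fintype T] {M : Type*} [AddCommMonoid M]
    (e : ι × X × Y ≃ T) (g : T → M) : ∑ i, ∑ x, ∑ y, g (e (i, x, y)) = ∑ t, g t := by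
  simp only [← Fintype.sum_prod_type']
  exact e.sum_comp g

lemma exists_reducedState_outer_eq_sum [Fintype ι] [DecidableEq ι] (e : ι × X × Y ≃ T)
    (φ : T → ℂ) :
    ∃ α : ι → ι → ℂ, (∀ i, IsUnitVec (α i)) ∧ reducedState e (outer φ)
      = ∑ i, ((∑ x, ∑ y, ‖φ (e (i, x, y))‖ ^ 2 : ℝ) : ℂ) • outer (α i) := by
  have hpos : (reducedState e (outer φ)).PosSemidef := by
    rw [reducedState_outer]
    refine posSemidef_sum _ fun x _ => posSemidef_sum _ fun y _ => outer_posSemidef _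
  obtain ⟨α, hα, hαφ⟩ := hpos.exists_eq_sum_diag_smul_outer
  refine ⟨α, hα, hαφ.trans (Finset.sum_congr rfl fun i _ => ?_)⟩
  simp [reducedState, outer, Complex.mul_conj, Complex.normSq_eq_norm_sq]
  norm_cast

variable (f : (ι : Type) → [Fintype ι] → (ι → ℝ) → ℝ)

lemma mixedCoh_reducedState_le [Fintype ι] [Fintype T]
    (hf : ∀ (ι : Type) [Fintype ι] (v : ι → ℝ), (∀ i, 0 ≤ v i) → 0 ≤ f ι v)
    (e : ι × X × Y ≃ T) {K : Type} [Fintype K] {ρ : Matrix T T ℂ} {p : K → ℝ}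
    {φ : K → T → ℂ} (hp0 : ∀ k, 0 ≤ p k) (hp1 : ∑ k, p k = 1) (hφ : ∀ k, IsUnitVec (φ k))
    (hρ : ρ = ∑ k, (p k : ℂ) • outer (φ k)) {α : K → ι → ι → ℂ}
    (hα : ∀ k i, IsUnitVec (α k i))
    (hαφ : ∀ k, reducedState e (outer (φ k))
      = ∑ i, ((∑ x, ∑ y, ‖φ k (e (i, x, y))‖ ^ 2 : ℝ) : ℂ) • outer (α k i)) :
    mixedCoh f (reducedState e ρ)
      ≤ ∑ k, p k * ∑ i, (∑ x, ∑ y, ‖φ k (e (i, x, y))‖ ^ 2) * pureCoh f (α k i) := by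
  rw [hρ, reducedState_sum_smul]
  simp only [hαφ]
  refine mixedCoh_sum_smul_sum_le f hf hp0 hp1
    (fun k i => Finset.sum_nonneg fun _ _ => Finset.sum_nonneg fun _ _ => sq_nonneg _)
    (fun k => ?_) hα
  rw [e.sum_sum_sum_comp fun t => ‖φ k t‖ ^ 2]
  exact hφ k

end ReducedState

lemma ite_pos_mul_of_nonneg {s : ℝ} (hs : 0 ≤ s) (t : ℝ) :
    (if 0 < s then s * t else 0) = s * t := by
  rcases hs.eq_or_lt with rfl | hs <;> simp [*]

/-- if for every tripartite pure state `|φ⟩_ABC = Σ_{ijk} c_{ijk}|i⟩|j⟩|k⟩`,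
with unit vectors `|α_i⟩, |β_j⟩, |γ_k⟩` realizing the decompositions
`ρ_A = Σ_i p_i |α_i⟩⟨α_i|`, `ρ_B = Σ_j q_j |β_j⟩⟨β_j|`, `ρ_C = Σ_k r_k |γ_k⟩⟨γ_k|` of the
reduced states of `|φ⟩⟨φ|`, one has
`C_f(|φ⟩_ABC) ≥ Σ_{i:p_i>0} p_i C_f(α_i) + Σ_{j:q_j>0} q_j C_f(β_j) + Σ_{k:r_k>0} r_k C_f(γ_k)`,
then `C_f` is superadditive on tripartite density matrices. -/
theorem superadditivity_of_pure_condition_tripartite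
    (f : (ι : Type) → [Fintype ι] → (ι → ℝ) → ℝ)
    (hf : ∀ (ι : Type) [Fintype ι] (v : ι → ℝ), (∀ i, 0 ≤ v i) → 0 ≤ f ι v)
    (hyp : ∀ (dA dB dC : ℕ) (c : Fin dA → Fin dB → Fin dC → ℂ),
      (∑ i, ∑ j, ∑ k, ‖c i j k‖ ^ 2) = 1 →
      ∀ (α : Fin dA → Fin dA → ℂ) (β : Fin dB → Fin dB → ℂ) (γ : Fin dC → Fin dC → ℂ),
        (∀ i, IsUnitVec (α i)) → (∀ j, IsUnitVec (β j)) → (∀ k, IsUnitVec (γ k)) →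
        (Matrix.of (fun i i' : Fin dA => ∑ j, ∑ k, c i j k * (starRingEnd ℂ) (c i' j k))
          = ∑ i, Complex.ofReal (∑ j, ∑ k, ‖c i j k‖ ^ 2) • outer (α i)) →
        (Matrix.of (fun j j' : Fin dB => ∑ i, ∑ k, c i j k * (starRingEnd ℂ) (c i j' k))
          = ∑ j, Complex.ofReal (∑ i, ∑ k, ‖c i j k‖ ^ 2) • outer (β j)) →
        (Matrix.of (fun k k' : Fin dC => ∑ i, ∑ j, c i j k * (starRingEnd ℂ) (c i j k'))
          = ∑ k, Complex.ofReal (∑ i, ∑ j, ‖c i j k‖ ^ 2) • outer (γ k)) →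
        pureCoh f (fun t : Fin dA × Fin dB × Fin dC => c t.1 t.2.1 t.2.2) ≥
          (∑ i : Fin dA, (if 0 < (∑ j, ∑ k, ‖c i j k‖ ^ 2) then
              (∑ j, ∑ k, ‖c i j k‖ ^ 2) * pureCoh f (α i) else 0))
          + (∑ j : Fin dB, (if 0 < (∑ i, ∑ k, ‖c i j k‖ ^ 2) then
              (∑ i, ∑ k, ‖c i j k‖ ^ 2) * pureCoh f (β j) else 0))
          + (∑ k : Fin dC, (if 0 < (∑ i, ∑ j, ‖c i j k‖ ^ 2) then
              (∑ i, ∑ j, ‖c i j k‖ ^ 2) * pureCoh f (γ k) else 0))) :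
    ∀ (dA dB dC : ℕ) (ρ : Matrix (Fin dA × Fin dB × Fin dC) (Fin dA × Fin dB × Fin dC) ℂ),
      IsDensity ρ →
      mixedCoh f ρ ≥
        mixedCoh f (Matrix.of fun i i' : Fin dA => ∑ j, ∑ k, ρ (i, j, k) (i', j, k))
        + mixedCoh f (Matrix.of fun j j' : Fin dB => ∑ i, ∑ k, ρ (i, j, k) (i, j', k))
        + mixedCoh f (Matrix.of fun k k' : Fin dC => ∑ i, ∑ j, ρ (i, j, k) (i, j, k')) := by
  intro dA dB dC ρ hρ
  -- The three reduced states in the goal are `reducedState eA ρ`, `reducedState eB ρ` and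
  -- `reducedState eC ρ` by unfolding, and likewise for the matrices in `hyp`.
  let eA : Fin dA × Fin dB × Fin dC ≃ Fin dA × Fin dB × Fin dC := Equiv.refl _
  let eB : Fin dB × Fin dA × Fin dC ≃ Fin dA × Fin dB × Fin dC :=
    ⟨fun t => (t.2.1, t.1, t.2.2), fun t => (t.2.1, t.1, t.2.2), fun _ => rfl, fun _ => rfl⟩
  let eC : Fin dC × Fin dA × Fin dB ≃ Fin dA × Fin dB × Fin dC :=
    ⟨fun t => (t.2.1, t.2.2, t.1), fun t => (t.2.2, t.1, t.2.1), fun _ => rfl, fun _ => rfl⟩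
  refine le_mixedCoh_of_forall f hρ fun K p φ hp0 hp1 hφ hρφ => ?_
  choose α hα hαφ using fun k => exists_reducedState_outer_eq_sum eA (φ k)
  choose β hβ hβφ using fun k => exists_reducedState_outer_eq_sum eB (φ k)
  choose γ hγ hγφ using fun k => exists_reducedState_outer_eq_sum eC (φ k)
  have hpure : ∀ k, (∑ i, (∑ j, ∑ l, ‖φ k (i, j, l)‖ ^ 2) * pureCoh f (α k i))
      + (∑ j, (∑ i, ∑ l, ‖φ k (i, j, l)‖ ^ 2) * pureCoh f (β k j))
      + (∑ l, (∑ i, ∑ j, ‖φ k (i, j, l)‖ ^ 2) * pureCoh f (γ k l)) ≤ pureCoh f (φ k) := by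
    intro k
    have := hyp dA dB dC (fun i j l => φ k (i, j, l)) ((eA.sum_sum_sum_comp _).trans (hφ k))
      (α k) (β k) (γ k) (hα k) (hβ k) (hγ k) (hαφ k) (hβφ k) (hγφ k)
    simpa (disch := positivity) only [ite_pos_mul_of_nonneg] using this
  refine le_trans ?_ (Finset.sum_le_sum fun k _ => mul_le_mul_of_nonneg_left (hpure k) (hp0 k))
  simp only [mul_add, Finset.sum_add_distrib]
  exact add_le_add (add_le_add (mixedCoh_reducedState_le f hf eA hp0 hp1 hφ hρφ hα hαφ)
    (mixedCoh_reducedState_le f hf eB hp0 hp1 hφ hρφ hβ hβφ))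
    (mixedCoh_reducedState_le f hf eC hp0 hp1 hφ hρφ hγ hγφ)

end
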